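/- arXiv:1911.00480 — 2 statements merged into one kernel-verified Lean document; each statement's English description precedes it below -/
import Mathlib

section
/- Let n ≥ 3 and let Q ∈ F_n with coefficients a_0 = 1, a_1, ..., a_n. Then for every j with 1 ≤ j ≤ n−2, one has 4(a_j² − a_{j−1} a_{j+1})(a_{j+1}² − a_j a_{j+2}) ≥ (a_{j−1} a_{j+2} − a_j a_{j+1})². -/
/-!
Write `cᵢ` for the coefficient of `Xⁱ`. By Rolle's theorem the derivative of a real polynomial
that splits over `ℝ` splits again, and the reverse of a split polynomial splits. Differentiating
`i` times, reversing and differentiating `d` more times cuts a split polynomial of degree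
`i + d + 2` down to a quadratic whose coefficients are factorial multiples of `cᵢ₊₂, cᵢ₊₁, cᵢ`;
its discriminant is nonnegative, which is Newton's inequality and gives `cᵢ cᵢ₊₂ ≤ cᵢ₊₁²`.
Applied to the coefficients `cⱼ + t cⱼ₊₁` of `(X + t) Q`, which splits for every real `t`, this
says that a quadratic in `t` is nonnegative, and the claim is that its discriminant is
nonpositive.
-/

open Polynomial Nat

namespace Polynomial

theorem natDegree_iterate_derivative_eq {R : Type*} [Semiring R] [IsAddTorsionFree R]
    (p : R[X]) (k : ℕ) : (derivative^[k] p).natDegree = p.natDegree - k := by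
  induction k with
  | zero => simp
  | succ k ih => rw [Function.iterate_succ_apply', natDegree_derivative, ih, Nat.sub_sub]

theorem factorial_mul_coeff_iterate_derivative {R : Type*} [Semiring R] (p : R[X]) (k j : ℕ) :
    (j ! : R) * (derivative^[k] p).coeff j = (j + k)! * p.coeff (j + k) := by
  rw [coeff_iterate_derivative, nsmul_eq_mul, ← mul_assoc, ← Nat.cast_mul,
    ← Nat.factorial_mul_descFactorial (Nat.le_add_left k j), Nat.add_sub_cancel]

theorem coeff_X_add_C_mul_succ {R : Type*} [Semiring R] (p : R[X]) (t : R) (j : ℕ) :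
    ((X + C t) * p).coeff (j + 1) = p.coeff j + t * p.coeff (j + 1) := by
  rw [add_mul, coeff_add, coeff_X_mul, coeff_C_mul]

theorem Splits.reverse {K : Type*} [DivisionRing K] {f : K[X]} (hf : f.Splits) :
    f.reverse.Splits := by
  induction hf using Submonoid.closure_induction with
  | mem g hg =>
    obtain ⟨a, rfl⟩ | ⟨a, rfl⟩ := hg
    · simp
    · exact .of_natDegree_le_one <| (reverse_natDegree_le _).trans (natDegree_X_add_C a).le
  | one => rw [← C_1, reverse_C]; exact .C 1
  | mul g h _ _ hg hh => rw [reverse_mul_of_domain]; exact hg.mul hh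

theorem Splits.derivative {f : ℝ[X]} (hf : f.Splits) : (Polynomial.derivative f).Splits := by
  rw [splits_iff_card_roots] at hf ⊢
  have := card_roots_le_derivative f
  have := card_roots' (Polynomial.derivative f)
  have := natDegree_derivative f
  omega

theorem Splits.iterate_derivative {f : ℝ[X]} (hf : f.Splits) (k : ℕ) :
    (Polynomial.derivative^[k] f).Splits := by
  induction k with
  | zero => exact hf
  | succ k ih => rw [Function.iterate_succ_apply']; exact ih.derivative

theorem Splits.discrim_nonneg {f : ℝ[X]} (hf : f.Splits) (h2 : f.natDegree ≤ 2) :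
    0 ≤ discrim (f.coeff 2) (f.coeff 1) (f.coeff 0) := by
  by_cases hc : f.coeff 2 = 0
  · rw [discrim, hc, mul_zero, zero_mul, sub_zero]
    positivity
  have hdeg : f.degree ≠ 0 := fun h => hc (coeff_eq_zero_of_degree_lt (by rw [h]; decide))
  obtain ⟨ρ, hρ⟩ := hf.exists_eval_eq_zero hdeg
  simp only [eval_eq_sum_range' (by omega : f.natDegree < 3), Finset.sum_range_succ,
    Finset.sum_range_zero] at hρ
  rw [discrim_eq_sq_of_quadratic_eq_zero (x := ρ) (by linear_combination hρ)]
  positivity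

theorem Splits.newton_coeff {p : ℝ[X]} (hp : p.Splits) {i d : ℕ}
    (hdeg : p.natDegree = i + d + 2) :
    ((i + 2) * (d + 2) : ℝ) * (p.coeff i * p.coeff (i + 2)) ≤
      ((i + 1) * (d + 1) : ℝ) * p.coeff (i + 1) ^ 2 := by
  set q := Polynomial.derivative^[i] p
  have hq : q.natDegree = d + 2 := by
    rw [natDegree_iterate_derivative_eq, hdeg]
    omega
  set u := Polynomial.derivative^[d] q.reverse
  have hu : u.natDegree ≤ 2 := by
    have := reverse_natDegree_le q
    rw [natDegree_iterate_derivative_eq]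
    omega
  have hdisc : 0 ≤ discrim (u.coeff 2) (u.coeff 1) (u.coeff 0) :=
    ((hp.iterate_derivative i).reverse.iterate_derivative d).discrim_nonneg hu
  have hcoeff (j : ℕ) (hj : j ≤ 2) :
      ((2 - j)! * j ! : ℝ) * u.coeff j = (j + d)! * (2 - j + i)! * p.coeff (2 - j + i) := by
    rw [mul_assoc, factorial_mul_coeff_iterate_derivative, coeff_reverse, hq,
      revAt_le (by omega), show d + 2 - (j + d) = 2 - j by omega, mul_left_comm,
      factorial_mul_coeff_iterate_derivative, ← mul_assoc]
  have hu0 : u.coeff 0 = d ! * (i + 2)! * p.coeff (i + 2) / 2 := by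
    have := hcoeff 0 (by norm_num)
    norm_num [add_comm] at this
    linear_combination this / 2
  have hu1 : u.coeff 1 = (d + 1)! * (i + 1)! * p.coeff (i + 1) := by
    have := hcoeff 1 (by norm_num)
    norm_num [add_comm] at this
    linear_combination this
  have hu2 : u.coeff 2 = (d + 2)! * i ! * p.coeff i / 2 := by
    have := hcoeff 2 le_rfl
    norm_num [add_comm] at this
    linear_combination this / 2
  rw [discrim, hu0, hu1, hu2] at hdisc
  simp only [Nat.factorial_succ, Nat.cast_mul, Nat.cast_succ] at hdisc
  have hF : 0 < ((d ! * i !) ^ 2 * ((d + 1) * (i + 1)) : ℝ) := by positivity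
  refine le_of_mul_le_mul_left ?_ hF
  linear_combination hdisc

theorem Splits.coeff_mul_coeff_le_sq {p : ℝ[X]} (hp : p.Splits) (i : ℕ) :
    p.coeff i * p.coeff (i + 2) ≤ p.coeff (i + 1) ^ 2 := by
  by_cases hi : i + 2 ≤ p.natDegree
  · obtain ⟨d, hd⟩ := Nat.exists_eq_add_of_le hi
    have := hp.newton_coeff (i := i) (d := d) (by omega)
    have : 0 < ((i + 1) * (d + 1) : ℝ) := by positivity
    nlinarith [sq_nonneg (p.coeff (i + 1))]
  · rw [coeff_eq_zero_of_natDegree_lt (n := i + 2) (by omega), mul_zero]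
    positivity

theorem Splits.sq_sub_le_four_mul {p : ℝ[X]} (hp : p.Splits) (i : ℕ) :
    (p.coeff i * p.coeff (i + 3) - p.coeff (i + 1) * p.coeff (i + 2)) ^ 2 ≤
      4 * (p.coeff (i + 1) ^ 2 - p.coeff i * p.coeff (i + 2)) *
        (p.coeff (i + 2) ^ 2 - p.coeff (i + 1) * p.coeff (i + 3)) := by
  have hquad (t : ℝ) :
      0 ≤ (p.coeff (i + 2) ^ 2 - p.coeff (i + 1) * p.coeff (i + 3)) * (t * t) +
        (p.coeff (i + 1) * p.coeff (i + 2) - p.coeff i * p.coeff (i + 3)) * t +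
        (p.coeff (i + 1) ^ 2 - p.coeff i * p.coeff (i + 2)) := by
    have := ((Splits.X_add_C t).mul hp).coeff_mul_coeff_le_sq (i + 1)
    simp only [coeff_X_add_C_mul_succ] at this
    linear_combination this
  have := discrim_le_zero hquad
  rw [discrim] at this
  linear_combination this

end Polynomial

theorem stmt_2_general (n : ℕ)
    (x : Fin n → ℤ)
    (Q : Polynomial ℤ) (hQ : Q = ∏ i, (X - C (x i))) :
    ∀ j : ℕ, 1 ≤ j → j ≤ n - 2 →
      4 * ((Q.coeff (n - j)) ^ 2 - Q.coeff (n - (j - 1)) * Q.coeff (n - (j + 1))) *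
          ((Q.coeff (n - (j + 1))) ^ 2 - Q.coeff (n - j) * Q.coeff (n - (j + 2))) ≥
        (Q.coeff (n - (j - 1)) * Q.coeff (n - (j + 2)) -
          Q.coeff (n - j) * Q.coeff (n - (j + 1))) ^ 2 := by
  intro j hj1 hj2
  obtain ⟨i, rfl⟩ : ∃ i, n = i + j + 2 := ⟨n - (j + 2), by omega⟩
  have hsplit : (Q.map (Int.castRingHom ℝ)).Splits :=
    hQ ▸ (Splits.prod fun k _ => Splits.X_sub_C (x k)).map _
  have h := hsplit.sq_sub_le_four_mul i
  simp only [coeff_map, eq_intCast] at h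
  rw [show i + j + 2 - (j - 1) = i + 3 by omega, show i + j + 2 - j = i + 2 by omega,
    show i + j + 2 - (j + 1) = i + 1 by omega, show i + j + 2 - (j + 2) = i by omega,
    ge_iff_le, ← Int.cast_le (R := ℝ)]
  push_cast
  linear_combination h

theorem stmt_2 (n : ℕ) (hn : 3 ≤ n)
    (x : Fin n → ℤ) (hx : ∀ i, x i ≠ 0)
    (Q : Polynomial ℤ) (hQ : Q = ∏ i, (X - C (x i))) :
    ∀ j : ℕ, 1 ≤ j → j ≤ n - 2 →
      4 * ((Q.coeff (n - j)) ^ 2 - Q.coeff (n - (j - 1)) * Q.coeff (n - (j + 1))) *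
          ((Q.coeff (n - (j + 1))) ^ 2 - Q.coeff (n - j) * Q.coeff (n - (j + 2))) ≥
        (Q.coeff (n - (j - 1)) * Q.coeff (n - (j + 2)) -
          Q.coeff (n - j) * Q.coeff (n - (j + 1))) ^ 2 :=
  stmt_2_general n x Q hQ
end

section
/- Let n ≥ 2, j ∈ {1, ..., n−1}, and let M be a positive real number. Then the set of polynomials Q ∈ F_n whose coefficients satisfy max(|a_j|, |a_{j+1}|) ≤ M is finite. -/
/-!
Peel off one root `z` of `Q = ∏ (X - xᵢ)` and let `t` be the other roots, `eₖ = eₖ(t)`.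
Up to sign, `a_j = e_j + z e_{j-1}` and `a_{j+1} = e_{j+1} + z e_j`, and
`e_j² - e_{j-1} e_{j+1} = e_j (e_j + z e_{j-1}) - e_{j-1} (e_{j+1} + z e_j)`.
If `e_{j-1} ≠ 0`, Newton's inequality `(j + 1) e_{j-1} e_{j+1} ≤ j e_j²` for the real
numbers `t` makes the left side at least `e_j² / (j + 1)`, while the right side is
`O(M (|e_j| + M))`; this bounds `e_j`, and then `|z| ≤ |z e_{j-1}|` is bounded.
If `e_{j-1} = 0`, then `e_j ≠ 0`, since nonzero reals never have two consecutive vanishing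
elementary symmetric functions; so `t` satisfies the hypothesis at index `j - 1`, induction
bounds the roots of `t`, hence `e_{j+1}`, hence `z`.

Both facts about real multisets come from Rolle's theorem: differentiating `∏ (X - a)` preserves
the means `eₖ / C(m, k)`, which reduces them to `m = k + 2`, where after inverting the roots they
become Cauchy–Schwarz and the positivity of a sum of squares.
-/

open Polynomial

lemma Nat.add_two_mul_choose_mul_choose_le (m k : ℕ) :
    (k + 2) * (m.choose k * m.choose (k + 2)) ≤ (k + 1) * m.choose (k + 1) ^ 2 := by
  have h₁ := Nat.choose_succ_right_eq m k
  have h₂ := Nat.choose_succ_right_eq m (k + 1)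
  calc (k + 2) * (m.choose k * m.choose (k + 2))
      = m.choose k * m.choose (k + 1) * (m - (k + 1)) := by rw [mul_assoc, ← h₂]; ring
    _ ≤ m.choose k * m.choose (k + 1) * (m - k) := by gcongr; omega
    _ = (k + 1) * m.choose (k + 1) ^ 2 := by rw [mul_right_comm, ← h₁]; ring

namespace Multiset

section CommRing

variable {R : Type*} [CommRing R]

@[simp]
lemma esymm_zero (s : Multiset R) : s.esymm 0 = 1 := by
  simp [esymm]

lemma esymm_eq_zero_of_card_lt {s : Multiset R} {k : ℕ} (h : card s < k) : s.esymm k = 0 := by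
  simp [esymm, powersetCard_eq_empty _ h]

lemma esymm_cons_succ (a : R) (s : Multiset R) (k : ℕ) :
    (a ::ₘ s).esymm (k + 1) = s.esymm (k + 1) + a * s.esymm k := by
  simp [esymm, powersetCard_cons, map_map, sum_map_mul_left]

lemma esymm_card (s : Multiset R) : s.esymm (card s) = s.prod := by
  induction s using Multiset.induction with
  | empty => simp
  | cons a s ih => rw [card_cons, esymm_cons_succ, esymm_eq_zero_of_card_lt (by simp), ih]; simp

lemma esymm_one (s : Multiset R) : s.esymm 1 = s.sum := by
  induction s using Multiset.induction with
  | empty => simp [esymm_eq_zero_of_card_lt (show card (0 : Multiset R) < 1 by simp)]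
  | cons a s ih => rw [esymm_cons_succ, ih]; simp [add_comm]

lemma two_mul_esymm_two (s : Multiset R) :
    2 * s.esymm 2 = s.sum ^ 2 - (s.map (· ^ 2)).sum := by
  induction s using Multiset.induction with
  | empty => simp [esymm_eq_zero_of_card_lt (show card (0 : Multiset R) < 2 by simp)]
  | cons a s ih =>
    rw [esymm_cons_succ, esymm_one, map_cons, sum_cons, sum_cons]
    linear_combination ih

lemma map_esymm {S : Type*} [CommRing S] (f : R →+* S) (s : Multiset R) (k : ℕ) :
    (s.map f).esymm k = f (s.esymm k) := by
  simp [esymm, powersetCard_map, map_map, map_multiset_sum, map_multiset_prod]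

end CommRing

section OrderedRing

variable {R : Type*} [CommRing R] [LinearOrder R] [IsStrictOrderedRing R]

lemma abs_coeff_prod_X_sub_C (s : Multiset R) {k : ℕ} (hk : k ≤ card s) :
    |(s.map fun a => X - C a).prod.coeff (card s - k)| = |s.esymm k| := by
  rw [prod_X_sub_C_coeff s (Nat.sub_le _ _), Nat.sub_sub_self hk, abs_mul, abs_pow, abs_neg,
    abs_one, one_pow, one_mul]

lemma abs_esymm_le {s : Multiset R} {b : R} (hb : ∀ x ∈ s, |x| ≤ b) (k : ℕ) :
    |s.esymm k| ≤ (1 + b) ^ card s := by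
  induction s using Multiset.induction generalizing k with
  | empty =>
    cases k with
    | zero => simp
    | succ k => simp [esymm_eq_zero_of_card_lt (s := (0 : Multiset R)) (k := k + 1) (by simp)]
  | cons a s ih =>
    have hs : ∀ x ∈ s, |x| ≤ b := fun x hx => hb x (mem_cons_of_mem hx)
    have hb0 : 0 ≤ b := (abs_nonneg a).trans (hb a (mem_cons_self a s))
    cases k with
    | zero => simp only [esymm_zero, abs_one, card_cons]; exact one_le_pow₀ (by linarith)
    | succ k =>
      rw [esymm_cons_succ, card_cons, pow_succ]
      calc |s.esymm (k + 1) + a * s.esymm k|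
          ≤ |s.esymm (k + 1)| + |a| * |s.esymm k| := by rw [← abs_mul]; exact abs_add_le _ _
        _ ≤ (1 + b) ^ card s + b * (1 + b) ^ card s := by
          gcongr
          · exact ih hs _
          · exact hb a (mem_cons_self a s)
          · exact ih hs _
        _ = (1 + b) ^ card s * (1 + b) := by ring

lemma sq_sum_le_card_mul_sum_sq (s : Multiset R) :
    s.sum ^ 2 ≤ card s * (s.map (· ^ 2)).sum := by
  classical
  have h := _root_.sq_sum_le_card_mul_sum_sq (s := s.toEnumFinset) (f := Prod.fst)
  have hsq : s.toEnumFinset.val.map (fun x => x.1 ^ 2) = s.map (· ^ 2) := by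
    conv_rhs => rw [← map_toEnumFinset_fst s]
    rw [map_map]; rfl
  simpa only [card_toEnumFinset, ← Finset.sum_map_val, map_toEnumFinset_fst, hsq] using h

end OrderedRing

section Field

variable {K : Type*} [Field K]

lemma prod_mul_esymm_map_inv {s : Multiset K} (hs : 0 ∉ s) {i j : ℕ} (hij : i + j = card s) :
    s.prod * (s.map (·⁻¹)).esymm i = s.esymm j := by
  induction s using Multiset.induction generalizing i j with
  | empty => simp_all
  | cons a s ih =>
    have ha : a ≠ 0 := fun h => hs (h ▸ mem_cons_self a s)
    have hs' : 0 ∉ s := fun h => hs (mem_cons_of_mem h)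
    rw [card_cons] at hij
    rcases i with _ | i
    · rw [zero_add] at hij
      rw [esymm_zero, mul_one, hij, ← card_cons, esymm_card]
    rw [map_cons, esymm_cons_succ, prod_cons]
    have hinv : a * s.prod * (a⁻¹ * (s.map (·⁻¹)).esymm i) =
        s.prod * (s.map (·⁻¹)).esymm i := by
      field_simp
    rcases j with _ | j
    · rw [esymm_eq_zero_of_card_lt (by simp; omega), mul_add, hinv, ih hs' (j := 0) (by omega)]
      simp
    · rw [mul_add, hinv, mul_assoc, ih hs' (j := j) (by omega), ih hs' (j := j + 1) (by omega),
        esymm_cons_succ]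
      ring

def esymmMean (s : Multiset K) (k : ℕ) : K :=
  s.esymm k / (card s).choose k

lemma esymmMean_eq_zero_iff [CharZero K] {s : Multiset K} {k : ℕ} (hk : k ≤ card s) :
    s.esymmMean k = 0 ↔ s.esymm k = 0 := by
  simp [esymmMean, Nat.choose_eq_zero_iff, hk]

end Field

section Real

lemma exists_card_eq_pred_esymmMean_eq (s : Multiset ℝ) :
    ∃ v : Multiset ℝ, card v = card s - 1 ∧
      ∀ k < card s, v.esymmMean k = s.esymmMean k := by
  set m := card s
  set p := (s.map fun a => X - C a).prod
  have hdeg : p.natDegree = m := natDegree_multiset_prod_X_sub_C_eq_card s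
  have hlead : p.leadingCoeff = 1 :=
    (monic_multiset_prod_of_monic _ _ fun a _ => monic_X_sub_C a).leadingCoeff
  have hroots : p.roots = s := roots_multiset_prod_X_sub_C s
  have hcard : card (derivative p).roots = m - 1 := by
    refine le_antisymm ((card_roots' _).trans (by rw [natDegree_derivative, hdeg])) ?_
    have := card_roots_le_derivative p
    rw [hroots] at this
    omega
  refine ⟨_, hcard, fun k hk => ?_⟩
  -- Vieta for `p'` (whose roots are all real, by Rolle) against `p' = ∑ (i + 1) pᵢ₊₁ Xⁱ`.
  have hq := coeff_eq_esymm_roots_of_card (p := derivative p)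
    (by rw [hcard, natDegree_derivative, hdeg]) (k := m - 1 - k)
    (by rw [natDegree_derivative, hdeg]; omega)
  have hp := coeff_eq_esymm_roots_of_card (p := p) (by rw [hroots, hdeg]) (k := m - k)
    (by rw [hdeg]; omega)
  rw [coeff_derivative, show m - 1 - k + 1 = m - k by omega, hp, leadingCoeff_derivative,
    natDegree_derivative, hlead, hdeg, hroots, show m - (m - k) = k by omega,
    show m - 1 - (m - 1 - k) = k by omega, Nat.cast_sub (by omega : k ≤ m - 1),
    Nat.cast_sub (by omega : 1 ≤ m)] at hq
  have key : (m : ℝ) * (derivative p).roots.esymm k = (m - k) * s.esymm k := by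
    apply mul_left_cancel₀ (pow_ne_zero k (by norm_num : (-1 : ℝ) ≠ 0))
    linear_combination -hq
  have hchoose : ((m - 1).choose k : ℝ) * m = (m.choose k : ℝ) * (m - k) := by
    have := Nat.choose_mul_succ_eq (m - 1) k
    rw [Nat.sub_add_cancel (by omega : 1 ≤ m)] at this
    rw [← Nat.cast_sub hk.le]
    exact_mod_cast this
  have hmk : (m : ℝ) - k ≠ 0 := sub_ne_zero.mpr (by exact_mod_cast hk.ne')
  have hc₁ : ((m - 1).choose k : ℝ) ≠ 0 :=
    Nat.cast_ne_zero.mpr (Nat.choose_pos (by omega)).ne'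
  have hc₂ : (m.choose k : ℝ) ≠ 0 := Nat.cast_ne_zero.mpr (Nat.choose_pos hk.le).ne'
  rw [esymmMean, esymmMean, hcard, div_eq_div_iff hc₁ hc₂]
  apply mul_right_cancel₀ hmk
  linear_combination ((m - 1).choose k : ℝ) * key - (derivative p).roots.esymm k * hchoose

lemma exists_card_eq_esymmMean_eq (s : Multiset ℝ) {D : ℕ} (hD : D ≤ card s) :
    ∃ v : Multiset ℝ, card v = D ∧ ∀ k ≤ D, v.esymmMean k = s.esymmMean k := by
  induction h : card s - D generalizing s with
  | zero => exact ⟨s, by omega, fun _ _ => rfl⟩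
  | succ d ih =>
    obtain ⟨u, hu, hus⟩ := exists_card_eq_pred_esymmMean_eq s
    obtain ⟨v, hv, hvu⟩ := ih u (by omega) (by omega)
    exact ⟨v, hv, fun k hk => (hvu k hk).trans (hus k (by omega))⟩

lemma esymm_of_card_eq_add_two {v : Multiset ℝ} (hv : 0 ∉ v) {k : ℕ} (hk : card v = k + 2) :
    v.esymm (k + 2) = v.prod ∧ v.esymm (k + 1) = v.prod * (v.map (·⁻¹)).sum ∧
      2 * v.esymm k =
        v.prod * ((v.map (·⁻¹)).sum ^ 2 - ((v.map (·⁻¹)).map (· ^ 2)).sum) := by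
  refine ⟨hk ▸ esymm_card v, ?_, ?_⟩
  · rw [← prod_mul_esymm_map_inv hv (i := 1) (by omega), esymm_one]
  · rw [← prod_mul_esymm_map_inv hv (i := 2) (by omega), ← two_mul_esymm_two]
    ring

lemma two_mul_esymm_mul_esymm_lt_sq {v : Multiset ℝ} (hv : 0 ∉ v) {k : ℕ}
    (hk : card v = k + 2) : 2 * v.esymm k * v.esymm (k + 2) < v.esymm (k + 1) ^ 2 := by
  obtain ⟨h₂, h₁, h₀⟩ := esymm_of_card_eq_add_two hv hk
  have hP : v.prod ≠ 0 := prod_ne_zero hv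
  have hsq : 0 < ((v.map (·⁻¹)).map (· ^ 2)).sum := by
    have hne : v ≠ 0 := by rintro rfl; simp at hk
    simpa [map_map] using
      sum_lt_sum_of_nonempty (f := fun _ => (0 : ℝ)) (g := fun x => (x ^ 2)⁻¹) hne
        fun x hx => by have : x ≠ 0 := fun h => hv (h ▸ hx); positivity
  rw [h₀, h₁, h₂]
  nlinarith [mul_pos (pow_pos (abs_pos.mpr hP) 2) hsq, sq_abs v.prod]

lemma esymmMean_mul_le_sq_of_card_eq {v : Multiset ℝ} {k : ℕ} (hk : card v = k + 2) :
    v.esymmMean k * v.esymmMean (k + 2) ≤ v.esymmMean (k + 1) ^ 2 := by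
  have hchoose : ((k + 2).choose k : ℝ) = (k + 2) * (k + 1) / 2 := by
    rw [← Nat.choose_symm (by omega : k ≤ k + 2), show k + 2 - k = 2 by omega,
      Nat.cast_choose_two]
    push_cast
    ring
  simp only [esymmMean, hk, Nat.choose_self, Nat.choose_succ_self_right, hchoose]
  push_cast
  by_cases h0 : (0 : ℝ) ∈ v
  · rw [← hk, esymm_card, prod_eq_zero h0]
    simp [sq_nonneg]
  obtain ⟨h₂, h₁, h₀⟩ := esymm_of_card_eq_add_two h0 hk
  have hcs := sq_sum_le_card_mul_sum_sq (v.map (·⁻¹))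
  rw [card_map, hk] at hcs
  set σ₁ := (v.map (·⁻¹)).sum
  set σ₂ := ((v.map (·⁻¹)).map (· ^ 2)).sum
  have he : v.esymm k = v.prod * (σ₁ ^ 2 - σ₂) / 2 := by rw [← h₀]; ring
  rw [h₂, h₁, he, div_one, div_pow, le_div_iff₀ (by positivity)]
  field_simp
  push_cast at hcs
  nlinarith [mul_le_mul_of_nonneg_left hcs (sq_nonneg v.prod)]

theorem esymmMean_mul_le_sq (s : Multiset ℝ) {k : ℕ} (hk : k + 2 ≤ card s) :
    s.esymmMean k * s.esymmMean (k + 2) ≤ s.esymmMean (k + 1) ^ 2 := by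
  obtain ⟨v, hv, hvs⟩ := exists_card_eq_esymmMean_eq s hk
  rw [← hvs k (by omega), ← hvs (k + 1) (by omega), ← hvs (k + 2) le_rfl]
  exact esymmMean_mul_le_sq_of_card_eq hv

theorem add_two_mul_esymm_mul_esymm_le (s : Multiset ℝ) (k : ℕ) :
    (k + 2) * s.esymm k * s.esymm (k + 2) ≤ (k + 1) * s.esymm (k + 1) ^ 2 := by
  rcases lt_or_ge (card s) (k + 2) with hlt | hk
  · rw [esymm_eq_zero_of_card_lt hlt, mul_zero]
    positivity
  set m := card s
  have hN := esymmMean_mul_le_sq s hk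
  have hc : ((k : ℝ) + 2) * (m.choose k * m.choose (k + 2)) ≤
      (k + 1) * m.choose (k + 1) ^ 2 := by
    exact_mod_cast Nat.add_two_mul_choose_mul_choose_le m k
  have hpos : ∀ i ≤ m, (0 : ℝ) < m.choose i := fun i hi => by exact_mod_cast Nat.choose_pos hi
  simp only [esymmMean] at hN
  rw [div_mul_div_comm, div_pow, div_le_div_iff₀ (mul_pos (hpos k (by omega)) (hpos _ hk))
    (pow_pos (hpos _ (by omega)) 2)] at hN
  refine le_of_mul_le_mul_right ?_ (pow_pos (hpos (k + 1) (by omega)) 2)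
  calc (k + 2) * s.esymm k * s.esymm (k + 2) * (m.choose (k + 1) : ℝ) ^ 2
      = (k + 2) * (s.esymm k * s.esymm (k + 2) * (m.choose (k + 1) : ℝ) ^ 2) := by ring
    _ ≤ (k + 2) * (s.esymm (k + 1) ^ 2 * (m.choose k * m.choose (k + 2))) := by gcongr
    _ = s.esymm (k + 1) ^ 2 * ((k + 2) * (m.choose k * m.choose (k + 2))) := by ring
    _ ≤ s.esymm (k + 1) ^ 2 * ((k + 1) * m.choose (k + 1) ^ 2) := by gcongr
    _ = (k + 1) * s.esymm (k + 1) ^ 2 * (m.choose (k + 1) : ℝ) ^ 2 := by ring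

theorem esymm_ne_zero_or_esymm_succ_ne_zero {s : Multiset ℝ} (hs : 0 ∉ s) {k : ℕ}
    (hk : k + 1 ≤ card s) : s.esymm k ≠ 0 ∨ s.esymm (k + 1) ≠ 0 := by
  induction h : card s - (k + 1) generalizing k with
  | zero => exact .inr (by rw [show k + 1 = card s by omega, esymm_card]; exact prod_ne_zero hs)
  | succ d ih =>
    rw [or_iff_not_and_not, not_not, not_not]
    rintro ⟨h₀, h₁⟩
    have h₂ : s.esymm (k + 2) ≠ 0 :=
      (ih (k := k + 1) (by omega) (by omega)).resolve_left (by simpa)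
    obtain ⟨v, hv, hvs⟩ := exists_card_eq_esymmMean_eq s (D := k + 2) (by omega)
    have hmean : ∀ i ≤ k + 2, v.esymm i = 0 ↔ s.esymm i = 0 := fun i hi => by
      rw [← esymmMean_eq_zero_iff (by omega), ← esymmMean_eq_zero_iff (by omega), hvs i hi]
    have hv0 : 0 ∉ v := fun h0 =>
      (hmean _ le_rfl).not.mpr h₂ (by rw [← hv, esymm_card, prod_eq_zero h0])
    have := two_mul_esymm_mul_esymm_lt_sq hv0 hv
    rw [(hmean k (by omega)).mpr h₀, (hmean (k + 1) (by omega)).mpr h₁] at this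
    simp at this

end Real

lemma add_two_mul_esymm_mul_esymm_le_int (s : Multiset ℤ) (k : ℕ) :
    (k + 2) * s.esymm k * s.esymm (k + 2) ≤ (k + 1) * s.esymm (k + 1) ^ 2 := by
  have h := add_two_mul_esymm_mul_esymm_le (s.map (Int.castRingHom ℝ)) k
  rw [map_esymm, map_esymm, map_esymm] at h
  simp only [eq_intCast] at h
  exact_mod_cast h

lemma esymm_ne_zero_or_esymm_succ_ne_zero_int {s : Multiset ℤ} (hs : 0 ∉ s) {k : ℕ}
    (hk : k + 1 ≤ card s) : s.esymm k ≠ 0 ∨ s.esymm (k + 1) ≠ 0 := by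
  have h := esymm_ne_zero_or_esymm_succ_ne_zero (s := s.map (Int.castRingHom ℝ))
    (by simpa using hs) (k := k) (by simpa using hk)
  rwa [map_esymm, map_esymm, ne_eq, map_eq_zero_iff _ (Int.cast_injective), ne_eq,
    map_eq_zero_iff _ (Int.cast_injective)] at h

end Multiset

open Multiset

lemma abs_le_of_abs_add_mul_le {z a b M : ℤ} (ha : a ≠ 0) (h : |b + z * a| ≤ M) :
    |z| ≤ M + |b| :=
  calc |z| ≤ |z * a| := by
        rw [abs_mul]; exact le_mul_of_one_le_right (abs_nonneg z) (Int.one_le_abs ha)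
    _ = |(b + z * a) - b| := by ring_nf
    _ ≤ |b + z * a| + |b| := abs_sub _ _
    _ ≤ M + |b| := by gcongr

lemma abs_le_of_sq_le_mul_sub {z a b c M K : ℤ} (hz : z ≠ 0) (ha : a ≠ 0) (hK : 0 ≤ K)
    (hN : b ^ 2 ≤ K * (b ^ 2 - a * c)) (h₁ : |b + z * a| ≤ M) (h₂ : |c + z * b| ≤ M) :
    |z| ≤ (2 * K + 2) * M := by
  have hM : 0 ≤ M := (abs_nonneg _).trans h₁
  have hdisc : b ^ 2 - a * c = b * (b + z * a) - a * (c + z * b) := by ring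
  have hdisc_le : b ^ 2 - a * c ≤ M * (2 * |b| + M) := by
    have e₁ : b * (b + z * a) ≤ |b| * M := (le_abs_self _).trans (by rw [abs_mul]; gcongr)
    have e₂ : -(a * (c + z * b)) ≤ |a| * M := (neg_le_abs _).trans (by rw [abs_mul]; gcongr)
    have e₃ : |a| ≤ M + |b| := abs_le_of_abs_add_mul_le hz (by rwa [mul_comm])
    rw [hdisc]
    linarith [mul_le_mul_of_nonneg_right e₃ hM]
  have hb : |b| ≤ (2 * K + 1) * M := by
    by_contra! h
    have hb0 : 0 < |b| := lt_of_le_of_lt (by positivity) h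
    nlinarith [sq_abs b, mul_le_mul_of_nonneg_left hdisc_le hK, mul_lt_mul_of_pos_right h hb0,
      mul_nonneg hM (by nlinarith : 0 ≤ |b| - K * M)]
  linarith [abs_le_of_abs_add_mul_le ha h₁]

theorem exists_abs_le_of_abs_esymm_le (n : ℕ) (M : ℤ) :
    ∃ B : ℤ, ∀ s : Multiset ℤ, card s = n → 0 ∉ s → ∀ j, 1 ≤ j → j + 1 ≤ n →
      |s.esymm j| ≤ M → |s.esymm (j + 1)| ≤ M → ∀ z ∈ s, |z| ≤ B := by
  induction n with
  | zero => exact ⟨0, fun s _ _ j hj hjn => by omega⟩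
  | succ n ih =>
    obtain ⟨B, hB⟩ := ih
    refine ⟨max ((2 * (n + 1) + 2) * M) (M + (1 + B) ^ n), ?_⟩
    intro s hs hs0 j hj hjn h₁ h₂ z hz
    obtain ⟨t, rfl⟩ := exists_cons_of_mem hz
    have ht : card t = n := by simpa using hs
    have hz0 : z ≠ 0 := fun h => hs0 (h ▸ mem_cons_self z t)
    have ht0 : 0 ∉ t := fun h => hs0 (mem_cons_of_mem h)
    have hM : 0 ≤ M := (abs_nonneg _).trans h₁
    obtain ⟨k, rfl⟩ : ∃ k, j = k + 1 := ⟨j - 1, by omega⟩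
    rw [esymm_cons_succ] at h₁ h₂
    by_cases hk : t.esymm k = 0
    · have hk₁ : 1 ≤ k := Nat.pos_of_ne_zero (by rintro rfl; simp at hk)
      have hk₂ : t.esymm (k + 1) ≠ 0 :=
        (esymm_ne_zero_or_esymm_succ_ne_zero_int ht0 (by omega)).resolve_left (not_not.mpr hk)
      rw [hk, mul_zero, add_zero] at h₁
      have hroots := hB t ht ht0 k hk₁ (by omega) (by rwa [hk, abs_zero]) h₁
      have hk₃ := ht ▸ abs_esymm_le hroots (k + 2)
      exact le_max_of_le_right ((abs_le_of_abs_add_mul_le hk₂ h₂).trans (by gcongr))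
    · have hN := add_two_mul_esymm_mul_esymm_le_int t k
      refine le_max_of_le_left ((abs_le_of_sq_le_mul_sub hz0 hk (K := k + 2) (by positivity)
        (by linear_combination hN) h₁ h₂).trans ?_)
      exact mul_le_mul_of_nonneg_right (by omega) hM

theorem stmt_10_general (n : ℕ) (j : ℕ) (hj1 : 1 ≤ j) (hj2 : j ≤ n - 1)
    (M : ℝ) :
    {Q : Polynomial ℤ |
      (∃ x : Fin n → ℤ, (∀ i, x i ≠ 0) ∧ Q = ∏ i, (X - C (x i))) ∧
      max |((Q.coeff (n - j) : ℤ) : ℝ)| |((Q.coeff (n - (j + 1)) : ℤ) : ℝ)| ≤ M}.Finite := by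
  obtain ⟨B, hB⟩ := exists_abs_le_of_abs_esymm_le n ⌊M⌋
  refine ((Fintype.piFinset fun _ : Fin n => Finset.Icc (-B) B).finite_toSet.image
    fun x => ∏ i, (X - C (x i))).subset ?_
  rintro Q ⟨⟨x, hx0, rfl⟩, hQ⟩
  set s : Multiset ℤ := Finset.univ.val.map x
  have hs : card s = n := by simp [s]
  have hs0 : 0 ∉ s := by simpa [s, eq_comm] using hx0
  have hprod : ∏ i, (X - C (x i)) = (s.map fun a => X - C a).prod := by
    rw [Finset.prod_eq_multiset_prod, map_map]
    rfl
  have hcoeff : ∀ k ≤ n,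
      |((∏ i, (X - C (x i))).coeff (n - k) : ℝ)| ≤ M → |s.esymm k| ≤ ⌊M⌋ := by
    intro k hk h
    rw [hprod, ← hs, ← Int.cast_abs, abs_coeff_prod_X_sub_C s (hs ▸ hk)] at h
    exact Int.le_floor.mpr h
  refine ⟨x, ?_, rfl⟩
  simp only [Finset.mem_coe, Fintype.mem_piFinset, Finset.mem_Icc, ← abs_le]
  exact fun i => hB s hs hs0 j hj1 (by omega) (hcoeff j (by omega) ((le_max_left _ _).trans hQ))
    (hcoeff (j + 1) (by omega) ((le_max_right _ _).trans hQ)) (x i) (by simp [s])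

theorem stmt_10 (n : ℕ) (hn : 2 ≤ n) (j : ℕ) (hj1 : 1 ≤ j) (hj2 : j ≤ n - 1)
    (M : ℝ) (hM : 0 < M) :
    {Q : Polynomial ℤ |
      (∃ x : Fin n → ℤ, (∀ i, x i ≠ 0) ∧ Q = ∏ i, (X - C (x i))) ∧
      max |((Q.coeff (n - j) : ℤ) : ℝ)| |((Q.coeff (n - (j + 1)) : ℤ) : ℝ)| ≤ M}.Finite :=
  stmt_10_general n j hj1 hj2 M
end
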